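/- Let Θ be a space of input histories over (E, I). For every ω ∈ E, the relation ∼_ω (constraint at ω) is an equivalence relation on TipHists_Θ(ω), and it equals the transitive closure of the reflexive symmetric relation R_ω := {(h,h') : h, h' ∈ TipHists_Θ(ω) and there exists k ∈ Ext(Θ) with h ≤ k and h' ≤ k}. -/

import Mathlib

namespace Caus

/-- Partial functions over events `E` with value family `V`:
each event is assigned an optional value. -/
abbrev PF (E : Type) (V : E → Type) : Type := ∀ ω : E, Option (V ω)

variable {E : Type} {I O : E → Type}

/-- The total function `k` viewed as a partial function with full domain. -/
def toPF (k : ∀ ω : E, I ω) : PF E I := fun ω => some (k ω)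

/-- Domain of a partial function. -/
def dom (h : PF E I) : Set E := {ω | (h ω).isSome}

/-- The order on partial functions: `h' ≤ h` iff `dom h' ⊆ dom h` and they agree on `dom h'`. -/
def le (h' h : PF E I) : Prop := ∀ ω : E, (h' ω).isSome → h' ω = h ω

/-- Compatibility: agreeing on the intersection of the domains. -/
def Compat (h h' : PF E I) : Prop :=
  ∀ ω : E, (h ω).isSome → (h' ω).isSome → h ω = h' ω

/-- Join of two partial functions (union, when they are compatible). -/
def join (h h' : PF E I) : PF E I := fun ω => (h ω).orElse fun _ => h' ω

/-- `k` is the join (union) of the set `S` of partial functions. -/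
def IsJoinOf (k : PF E I) (S : Set (PF E I)) : Prop :=
  ∀ (ω : E) (x : I ω), k ω = some x ↔ ∃ h ∈ S, h ω = some x

/-- `Ext Θ`: joins of nonempty pairwise-compatible subsets of `Θ`. -/
def Ext (Θ : Set (PF E I)) : Set (PF E I) :=
  {k | ∃ S ⊆ Θ, S.Nonempty ∧ S.Pairwise Compat ∧ IsJoinOf k S}

/-- A space of input histories: every `h ∈ Θ` is ∨-prime in `Ext Θ`. -/
def IsSpace (Θ : Set (PF E I)) : Prop :=
  ∀ h ∈ Θ, ∀ k ∈ Ext Θ, ∀ k' ∈ Ext Θ, Compat k k' →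
    le h (join k k') → le h k ∨ le h k'

/-- Tip events of `h` in `Θ`. -/
def tips (Θ : Set (PF E I)) (h : PF E I) : Set E :=
  {ω | ω ∈ dom h ∧ ∀ h' ∈ Θ, le h' h → h' ≠ h → ω ∉ dom h'}

/-- Extended functions: the output partial function has the same domain as the input. -/
def IsExtFun (Θ : Set (PF E I)) (F : PF E I → PF E O) : Prop :=
  ∀ k ∈ Ext Θ, dom (F k) = dom k

/-- The consistency condition for extended functions. -/
def Consistent (Θ : Set (PF E I)) (F : PF E I → PF E O) : Prop :=
  ∀ k ∈ Ext Θ, ∀ k' ∈ Ext Θ, le k' k → le (F k') (F k)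

/-- `h` and `h'` are constrained at `ω`: both have tip `ω` and every consistent
extended function with binary outputs takes the same value at `ω` on them. -/
def Constr (Θ : Set (PF E I)) (ω : E) (h h' : PF E I) : Prop :=
  h ∈ Θ ∧ h' ∈ Θ ∧ ω ∈ tips Θ h ∧ ω ∈ tips Θ h' ∧
  ∀ F : PF E I → PF E (fun _ => Bool),
    IsExtFun Θ F → Consistent Θ F → F h ω = F h' ω

/-- Causal function conditions: `f h` is an assignment of outputs to the tips of `h`,
with equal outputs on histories constrained at an event. -/
def IsCausFun (Θ : Set (PF E I)) (f : PF E I → PF E O) : Prop :=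
  (∀ h ∈ Θ, dom (f h) = tips Θ h) ∧
  ∀ (ω : E) (h h' : PF E I), Constr Θ ω h h' → f h ω = f h' ω

/-- Causal functions for `Θ` with outputs `W` (normalized to `none` outside `Θ`). -/
def CausFunSet (Θ : Set (PF E I)) (W : E → Type) : Set (PF E I → PF E W) :=
  {f | IsCausFun Θ f ∧ ∀ h ∉ Θ, ∀ ω : E, f h ω = none}

open Classical in
/-- The extended causal function `Ext f` of a causal function `f`. -/
noncomputable def extCF (Θ : Set (PF E I)) (f : PF E I → PF E O) : PF E I → PF E O :=
  fun k ω =>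
    if hh : ∃ h, h ∈ Θ ∧ le h k ∧ ω ∈ tips Θ h then f hh.choose ω else none

open Classical in
/-- `Prime F̂`: the causal function underlying a consistent extended function. -/
noncomputable def primeCF (Θ : Set (PF E I)) (F : PF E I → PF E O) : PF E I → PF E O :=
  fun h ω => if h ∈ Θ ∧ ω ∈ tips Θ h then F h ω else none

open Classical in
/-- Restriction of a causal function to a lowerset (normalized outside it). -/
noncomputable def restrictCF (lam : Set (PF E I)) (f : PF E I → PF E O) :
    PF E I → PF E O :=
  fun h => if h ∈ lam then f h else fun _ => none

/-- The free-choice condition. -/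
def FreeChoice (Θ : Set (PF E I)) : Prop := ∀ k : ∀ ω : E, I ω, toPF k ∈ Ext Θ

/-- Tightness. -/
def Tight (Θ : Set (PF E I)) : Prop :=
  ∀ k ∈ Ext Θ, ∀ ω ∈ dom k, ∃! h, h ∈ Θ ∧ le h k ∧ ω ∈ tips Θ h

/-- Maximal extended input histories. -/
def maxExt (Θ : Set (PF E I)) : Set (PF E I) :=
  {k | k ∈ Ext Θ ∧ ∀ k' ∈ Ext Θ, le k k' → k' = k}

/-- Lowersets (downward-closed subsets) of a space `Θ`. -/
def IsLowersetOf (Θ lam : Set (PF E I)) : Prop :=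
  lam ⊆ Θ ∧ ∀ h ∈ lam, ∀ h' ∈ Θ, le h' h → h' ∈ lam


/-- The histories having `ω` as a tip event. -/
def TipHists (Θ : Set (PF E I)) (ω : E) : Set (PF E I) :=
  {h | h ∈ Θ ∧ ω ∈ tips Θ h}

/-- The reflexive symmetric relation `R_ω`: both histories have `ω` as a tip event
and some extended input history lies above both. -/
def Rrel (Θ : Set (PF E I)) (ω : E) (h h' : PF E I) : Prop :=
  h ∈ TipHists Θ ω ∧ h' ∈ TipHists Θ ω ∧ ∃ k ∈ Ext Θ, le h k ∧ le h' k

/-!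
`R_ω ⊆ ∼_ω` because consistency transports the values of `F̂` at `ω` from `h` and `h'` up to a
common extension `k`. Conversely, fix `h` and let `F̂(k)(ω)` say whether `k` lies above some tip
history at `ω` that is `R_ω`-reachable from `h` (and `F̂` be `false` elsewhere). This is consistent:
if `k' ≤ k` are both defined at `ω`, any tip history below `k` is `R_ω`-related, through `k`, to
one below `k'` (which exists by finiteness of `E`). Since `F̂(h)(ω) = true`, also `F̂(h')(ω) = true`
for `h' ∼_ω h`, and the only tip history at `ω` below `h'` is `h'` itself.
-/

namespace le

variable {E : Type} {I : E → Type}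

theorem refl (h : PF E I) : le h h := fun _ _ => rfl

theorem trans {a b c : PF E I} (hab : le a b) (hbc : le b c) : le a c := by
  intro ω hω
  rw [hab ω hω, hbc ω (hab ω hω ▸ hω)]

theorem dom_subset {a b : PF E I} (hab : le a b) : dom a ⊆ dom b :=
  fun ω hω => (hab ω hω ▸ hω : (b ω).isSome)

theorem eq_of_dom_subset {a b : PF E I} (hab : le a b) (hba : dom b ⊆ dom a) : a = b := by
  funext ω
  by_cases hω : (a ω).isSome
  · exact hab ω hω
  · have hbω : ¬(b ω).isSome := fun h => hω (hba h)
    rw [Option.not_isSome_iff_eq_none] at hω hbω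
    rw [hω, hbω]

end le

section

variable {E : Type} {I : E → Type} {Θ : Set (PF E I)} {ω : E}

theorem mem_Ext_of_mem {h : PF E I} (hh : h ∈ Θ) : h ∈ Ext Θ :=
  ⟨{h}, Set.singleton_subset_iff.mpr hh, Set.singleton_nonempty h,
    Set.pairwise_singleton _ _, fun _ _ => by simp⟩

theorem IsJoinOf.le {k : PF E I} {S : Set (PF E I)} (hk : IsJoinOf k S) {g : PF E I}
    (hg : g ∈ S) : le g k := by
  intro ω hω
  obtain ⟨x, hx⟩ := Option.isSome_iff_exists.mp hω
  rw [hx, (hk ω x).mpr ⟨g, hg, hx⟩]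

theorem eq_of_le_of_mem_tips {g h : PF E I} (hg : g ∈ Θ) (hgh : le g h) (hωg : ω ∈ dom g)
    (hωh : ω ∈ tips Θ h) : g = h := by
  by_contra hne
  exact hωh.2 g hg hgh hne hωg

theorem exists_tipHist_le_of_mem_dom [Finite E] {g : PF E I} (hg : g ∈ Θ) (hω : ω ∈ dom g) :
    ∃ g' ∈ TipHists Θ ω, le g' g := by
  by_cases htip : ∀ h' ∈ Θ, le h' g → h' ≠ g → ω ∉ dom h'
  · exact ⟨g, ⟨hg, hω, htip⟩, le.refl g⟩
  push Not at htip
  obtain ⟨g', hg', hle, hne, hω'⟩ := htip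
  have : (dom g').ncard < (dom g).ncard :=
    Set.ncard_lt_ncard ⟨hle.dom_subset, fun h => hne (hle.eq_of_dom_subset h)⟩
  obtain ⟨g'', hg'', hle'⟩ := exists_tipHist_le_of_mem_dom hg' hω'
  exact ⟨g'', hg'', hle'.trans hle⟩
termination_by (dom g).ncard

theorem exists_tipHist_le_of_mem_Ext [Finite E] {k : PF E I} (hk : k ∈ Ext Θ) (hω : ω ∈ dom k) :
    ∃ g ∈ TipHists Θ ω, le g k := by
  obtain ⟨S, hSΘ, -, -, hJ⟩ := hk
  obtain ⟨x, hx⟩ := Option.isSome_iff_exists.mp hω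
  obtain ⟨h, hS, hhx⟩ := (hJ ω x).mp hx
  obtain ⟨g, hg, hgh⟩ := exists_tipHist_le_of_mem_dom (hSΘ hS) (by simp [dom, hhx] : ω ∈ dom h)
  exact ⟨g, hg, hgh.trans (hJ.le hS)⟩

theorem Rrel.refl {h : PF E I} (hh : h ∈ TipHists Θ ω) : Rrel Θ ω h h :=
  ⟨hh, hh, h, mem_Ext_of_mem hh.1, le.refl h, le.refl h⟩

theorem Constr.refl {h : PF E I} (hh : h ∈ TipHists Θ ω) : Constr Θ ω h h :=
  ⟨hh.1, hh.1, hh.2, hh.2, fun _ _ _ => rfl⟩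

theorem Constr.symm {h h' : PF E I} (hc : Constr Θ ω h h') : Constr Θ ω h' h :=
  ⟨hc.2.1, hc.1, hc.2.2.2.1, hc.2.2.1, fun F hF hC => (hc.2.2.2.2 F hF hC).symm⟩

theorem Constr.trans {h h' h'' : PF E I} (h₁ : Constr Θ ω h h') (h₂ : Constr Θ ω h' h'') :
    Constr Θ ω h h'' :=
  ⟨h₁.1, h₂.2.1, h₁.2.2.1, h₂.2.2.2.1,
    fun F hF hC => (h₁.2.2.2.2 F hF hC).trans (h₂.2.2.2.2 F hF hC)⟩

theorem Rrel.constr {h h' : PF E I} (hR : Rrel Θ ω h h') : Constr Θ ω h h' := by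
  obtain ⟨⟨hΘ, htip⟩, ⟨h'Θ, h'tip⟩, k, hk, hhk, hh'k⟩ := hR
  refine ⟨hΘ, h'Θ, htip, h'tip, fun F hF hC => ?_⟩
  have hdom : ∀ g ∈ Θ, ω ∈ dom g → (F g ω).isSome := fun g hg hω =>
    ((hF g (mem_Ext_of_mem hg)).symm ▸ hω : ω ∈ dom (F g))
  rw [hC k hk h (mem_Ext_of_mem hΘ) hhk ω (hdom h hΘ htip.1),
    hC k hk h' (mem_Ext_of_mem h'Θ) hh'k ω (hdom h' h'Θ h'tip.1)]

theorem Constr.of_transGen {h h' : PF E I} (hR : Relation.TransGen (Rrel Θ ω) h h') :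
    Constr Θ ω h h' := by
  induction hR with
  | single hR => exact hR.constr
  | tail _ hR ih => exact ih.trans hR.constr

def AboveReachable (Θ : Set (PF E I)) (ω : E) (h k : PF E I) : Prop :=
  ∃ g ∈ TipHists Θ ω, le g k ∧ Relation.ReflTransGen (Rrel Θ ω) h g

theorem aboveReachable_iff_of_le [Finite E] {h k k' : PF E I} (hk : k ∈ Ext Θ)
    (hk' : k' ∈ Ext Θ) (hle : le k' k) (hω : ω ∈ dom k') :
    AboveReachable Θ ω h k' ↔ AboveReachable Θ ω h k := by
  constructor
  · rintro ⟨g, hg, hgk', hhg⟩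
    exact ⟨g, hg, hgk'.trans hle, hhg⟩
  · rintro ⟨g, hg, hgk, hhg⟩
    obtain ⟨g', hg', hg'k'⟩ := exists_tipHist_le_of_mem_Ext hk' hω
    exact ⟨g', hg', hg'k', hhg.tail ⟨hg, hg', k, hk, hgk, hg'k'.trans hle⟩⟩

open Classical in
noncomputable def reachIndicator (Θ : Set (PF E I)) (ω : E) (h : PF E I) :
    PF E I → PF E (fun _ => Bool) :=
  fun k ω' => (k ω').map fun _ => decide (ω' = ω ∧ AboveReachable Θ ω h k)

theorem isExtFun_reachIndicator (h : PF E I) : IsExtFun Θ (reachIndicator Θ ω h) := by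
  intro k _
  ext ω'
  simp [dom, reachIndicator]

theorem consistent_reachIndicator [Finite E] (h : PF E I) :
    Consistent Θ (reachIndicator Θ ω h) := by
  intro k hk k' hk' hle ω' hω'
  have hk'ω' : (k' ω').isSome := by simpa [reachIndicator] using hω'
  simp only [reachIndicator, hle ω' hk'ω']
  by_cases hω : ω' = ω
  · subst hω
    rw [propext (aboveReachable_iff_of_le hk hk' hle hk'ω')]
  · simp only [hω, false_and]

theorem transGen_of_constr [Finite E] {h h' : PF E I} (hc : Constr Θ ω h h') :
    Relation.TransGen (Rrel Θ ω) h h' := by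
  obtain ⟨hΘ, -, htip, h'tip, hF⟩ := hc
  have hsep := hF (reachIndicator Θ ω h) (isExtFun_reachIndicator h) (consistent_reachIndicator h)
  have hreach : AboveReachable Θ ω h h' := by
    have hself : AboveReachable Θ ω h h := ⟨h, ⟨hΘ, htip⟩, le.refl h, .refl⟩
    obtain ⟨x, hx⟩ := Option.isSome_iff_exists.mp htip.1
    obtain ⟨x', hx'⟩ := Option.isSome_iff_exists.mp h'tip.1
    simpa [reachIndicator, hx, hx', hself] using hsep
  obtain ⟨g, ⟨hg, hgtip⟩, hgh', hhg⟩ := hreach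
  obtain rfl := eq_of_le_of_mem_tips hg hgh' hgtip.1 h'tip
  rcases Relation.reflTransGen_iff_eq_or_transGen.mp hhg with rfl | hhg
  · exact .single (Rrel.refl ⟨hΘ, htip⟩)
  · exact hhg

end

theorem stmt6_general {E : Type} [Fintype E] {I : E → Type}
    (Θ : Set (PF E I)) (ω : E) :
    (∀ h ∈ TipHists Θ ω, Constr Θ ω h h) ∧
    (∀ h h' : PF E I, Constr Θ ω h h' → Constr Θ ω h' h) ∧
    (∀ h h' h'' : PF E I, Constr Θ ω h h' → Constr Θ ω h' h'' → Constr Θ ω h h'') ∧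
    (∀ h h' : PF E I, Constr Θ ω h h' ↔ Relation.TransGen (Rrel Θ ω) h h') :=
  ⟨fun _ => Constr.refl, fun _ _ => Constr.symm, fun _ _ _ => Constr.trans,
    fun _ _ => ⟨transGen_of_constr, Constr.of_transGen⟩⟩

/-- the constraint relation `∼_ω` is an equivalence relation on
`TipHists Θ ω`, and it equals the transitive closure of `R_ω`. -/
theorem stmt6 {E : Type} [Fintype E] {I : E → Type} [∀ ω, Nonempty (I ω)]
    (Θ : Set (PF E I)) (hS : IsSpace Θ) (ω : E) :
    (∀ h ∈ TipHists Θ ω, Constr Θ ω h h) ∧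
    (∀ h h' : PF E I, Constr Θ ω h h' → Constr Θ ω h' h) ∧
    (∀ h h' h'' : PF E I, Constr Θ ω h h' → Constr Θ ω h' h'' → Constr Θ ω h h'') ∧
    (∀ h h' : PF E I, Constr Θ ω h h' ↔ Relation.TransGen (Rrel Θ ω) h h') :=
  stmt6_general Θ ω

end Caus
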